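/- Let Q₁, ..., Qₘ be probability measures equivalent to P, each satisfying a linear constraint E^{Q_i}[Φ_i] = 0 and each having finite KL divergence to P. If Q† minimizes Σ π_i D_KL(Q ‖ Q_i) subject to E^Q[Y] = E_P[Y] (with π_i > 0 summing to 1), then D_KL(Q† ‖ Q^b) ≤ D_KL(Q̃ ‖ Q^b) for any other feasible Q̃, where Q^b is the unconstrained KL barycentre of the Q_i. Equivalently, Q† is also the KL projection of Q^b onto the affine constraint set {Q : E^Q[Y] = E_P[Y]}. -/

import Mathlib

/-!
Since `log Q^b = ∑ πᵢ log Qᵢ - log Z`, the weights summing to one give, for every density `g`,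
`∑ πᵢ D_KL(g ‖ Qᵢ) = D_KL(g ‖ Q^b) - log Z`. The two objectives differ by a constant on the
feasible set, so they have the same minimizers.
-/

open MeasureTheory Real Finset

theorem Real.log_prod_rpow {ι : Type*} (s : Finset ι) {x : ι → ℝ} (hx : ∀ i ∈ s, 0 < x i)
    (w : ι → ℝ) : log (∏ i ∈ s, x i ^ w i) = ∑ i ∈ s, w i * log (x i) := by
  rw [log_prod fun i hi => (rpow_pos_of_pos (hx i hi) _).ne']
  exact sum_congr rfl fun i hi => log_rpow (hx i hi) _

theorem sum_mul_mul_log_div_eq_mul_log_div_geomMean {ι : Type*} (s : Finset ι) {w : ι → ℝ}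
    (hw : ∑ i ∈ s, w i = 1) {x : ι → ℝ} (hx : ∀ i ∈ s, 0 < x i) {Z : ℝ} (hZ : Z ≠ 0) (g : ℝ) :
    ∑ i ∈ s, w i * (g * log (g / x i))
      = g * log (g / ((∏ i ∈ s, x i ^ w i) / Z)) - log Z * g := by
  rcases eq_or_ne g 0 with rfl | hg
  · simp
  have hprod : 0 < ∏ i ∈ s, x i ^ w i := prod_pos fun i hi => rpow_pos_of_pos (hx i hi) _
  have hlog_geomMean : log (g / ((∏ i ∈ s, x i ^ w i) / Z))
      = log g - (∑ i ∈ s, w i * log (x i) - log Z) := by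
    rw [log_div hg (div_ne_zero hprod.ne' hZ), log_div hprod.ne' hZ, log_prod_rpow s hx]
  calc ∑ i ∈ s, w i * (g * log (g / x i))
      = ∑ i ∈ s, (w i * (g * log g) - g * (w i * log (x i))) := by
        refine sum_congr rfl fun i hi => ?_
        rw [log_div hg (hx i hi).ne']
        ring
    _ = (∑ i ∈ s, w i) * (g * log g) - g * ∑ i ∈ s, w i * log (x i) := by
        rw [sum_sub_distrib, sum_mul, mul_sum]
    _ = g * log (g / ((∏ i ∈ s, x i ^ w i) / Z)) - log Z * g := by
        rw [hw, hlog_geomMean]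
        ring

theorem sum_mul_integral_mul_log_div_eq {Ω ι : Type*} [MeasurableSpace Ω] [Fintype ι]
    {μ : Measure Ω} {w : ι → ℝ} (hw : ∑ i, w i = 1) {f : ι → Ω → ℝ}
    (hf : ∀ i, ∀ᵐ ω ∂μ, 0 < f i ω) {Z : ℝ} (hZ : Z ≠ 0) {g : Ω → ℝ} (hg : Integrable g μ)
    (hgf : ∀ i, Integrable (fun ω => g ω * log (g ω / f i ω)) μ)
    (hgb : Integrable (fun ω => g ω * log (g ω / ((∏ i, f i ω ^ w i) / Z))) μ) :
    ∑ i, w i * ∫ ω, g ω * log (g ω / f i ω) ∂μ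
      = ∫ ω, g ω * log (g ω / ((∏ i, f i ω ^ w i) / Z)) ∂μ - log Z * ∫ ω, g ω ∂μ := by
  have hpointwise : ∀ᵐ ω ∂μ, ∑ i, w i * (g ω * log (g ω / f i ω))
      = g ω * log (g ω / ((∏ i, f i ω ^ w i) / Z)) - log Z * g ω := by
    filter_upwards [ae_all_iff.mpr hf] with ω hfω
    exact sum_mul_mul_log_div_eq_mul_log_div_geomMean univ hw (fun i _ => hfω i) hZ (g ω)
  simp_rw [← integral_const_mul]
  rw [← integral_finsetSum _ fun i _ => (hgf i).const_mul (w i), integral_congr_ae hpointwise,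
    integral_sub hgb (hg.const_mul _)]

theorem constrained_minimizer_is_projection_general
    {Ω : Type*} [MeasurableSpace Ω] (P : Measure Ω)
    (m : ℕ) (f : Fin m → Ω → ℝ) (w : Fin m → ℝ)
    (hws : ∑ i, w i = 1)
    (hfpos : ∀ i, ∀ᵐ ω ∂P, 0 < f i ω)
    (Z : ℝ) (hZpos : 0 < Z)
    (hb : Ω → ℝ) (hhb : hb = fun ω => (∏ i, f i ω ^ w i) / Z)
    (Y : Ω → ℝ)
    -- Feasibility of a density g:
    (Feas : (Ω → ℝ) → Prop)
    (hFeas : ∀ g, Feas g ↔ (Measurable g ∧ (∀ᵐ ω ∂P, 0 ≤ g ω) ∧ (∫ ω, g ω ∂P = 1) ∧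
        (∫ ω, g ω * Y ω ∂P = ∫ ω, Y ω ∂P) ∧
        (∀ i, Integrable (fun ω => g ω * Real.log (g ω / f i ω)) P) ∧
        Integrable (fun ω => g ω * Real.log (g ω / hb ω)) P))
    (qd : Ω → ℝ) (hqdFeas : Feas qd)
    -- Q† minimizes the weighted KL objective over the feasible set:
    (hqdmin : ∀ g, Feas g →
        ∑ i, w i * ∫ ω, qd ω * Real.log (qd ω / f i ω) ∂P
          ≤ ∑ i, w i * ∫ ω, g ω * Real.log (g ω / f i ω) ∂P) :
    ∀ g, Feas g →
      (∫ ω, qd ω * Real.log (qd ω / hb ω) ∂P)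
        ≤ ∫ ω, g ω * Real.log (g ω / hb ω) ∂P := by
  have decomp : ∀ g, Feas g → ∑ i, w i * ∫ ω, g ω * log (g ω / f i ω) ∂P
      = ∫ ω, g ω * log (g ω / hb ω) ∂P - log Z := by
    intro g hg
    obtain ⟨-, -, hg_one, -, hgf, hgb⟩ := (hFeas g).1 hg
    have hg_int : Integrable g P := .of_integral_ne_zero (by simp [hg_one])
    subst hhb
    rw [sum_mul_integral_mul_log_div_eq hws hfpos hZpos.ne' hg_int hgf hgb, hg_one, mul_one]
  intro g hg
  linarith [decomp qd hqdFeas, decomp g hg, hqdmin g hg]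

/-- The constrained minimizer of the weighted KL objective is also the KL projection of the
unconstrained barycentre `Q^b` onto the affine constraint set `{Q : E^Q[Y] = E_P[Y]}`. -/
theorem constrained_minimizer_is_projection
    {Ω : Type*} [MeasurableSpace Ω] (P : Measure Ω) [IsProbabilityMeasure P]
    (m : ℕ) (f : Fin m → Ω → ℝ) (w : Fin m → ℝ)
    (hw : ∀ i, 0 < w i) (hws : ∑ i, w i = 1)
    (hfmeas : ∀ i, Measurable (f i))
    (hfpos : ∀ i, ∀ᵐ ω ∂P, 0 < f i ω)
    (hfint : ∀ i, Integrable (f i) P) (hfone : ∀ i, ∫ ω, f i ω ∂P = 1)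
    -- each Q_i satisfies a linear constraint and has finite KL divergence to P
    (Φ : Fin m → Ω → ℝ) (hconstr : ∀ i, ∫ ω, f i ω * Φ i ω ∂P = 0)
    (hKLfin : ∀ i, Integrable (fun ω => f i ω * Real.log (f i ω)) P)
    (hprodint : Integrable (fun ω => ∏ i, f i ω ^ w i) P)
    (Z : ℝ) (hZ : Z = ∫ ω, ∏ i, f i ω ^ w i ∂P) (hZpos : 0 < Z)
    (hb : Ω → ℝ) (hhb : hb = fun ω => (∏ i, f i ω ^ w i) / Z)
    (Y : Ω → ℝ) (hYmeas : Measurable Y) (hYint : Integrable Y P)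
    -- Feasibility of a density g:
    (Feas : (Ω → ℝ) → Prop)
    (hFeas : ∀ g, Feas g ↔ (Measurable g ∧ (∀ᵐ ω ∂P, 0 ≤ g ω) ∧ (∫ ω, g ω ∂P = 1) ∧
        (∫ ω, g ω * Y ω ∂P = ∫ ω, Y ω ∂P) ∧
        (∀ i, Integrable (fun ω => g ω * Real.log (g ω / f i ω)) P) ∧
        Integrable (fun ω => g ω * Real.log (g ω / hb ω)) P))
    (qd : Ω → ℝ) (hqdFeas : Feas qd)
    -- Q† minimizes the weighted KL objective over the feasible set:
    (hqdmin : ∀ g, Feas g →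
        ∑ i, w i * ∫ ω, qd ω * Real.log (qd ω / f i ω) ∂P
          ≤ ∑ i, w i * ∫ ω, g ω * Real.log (g ω / f i ω) ∂P) :
    ∀ g, Feas g →
      (∫ ω, qd ω * Real.log (qd ω / hb ω) ∂P)
        ≤ ∫ ω, g ω * Real.log (g ω / hb ω) ∂P :=
  constrained_minimizer_is_projection_general P m f w hws hfpos Z hZpos hb hhb Y Feas hFeas qd
    hqdFeas hqdmin
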